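/- arXiv:2404.07125 — 4 statements merged into one kernel-verified Lean document; each statement's English description precedes it below -/
import Mathlib

section
/- Let n, t ≥ 1 and let a : ℕ^n → ℝ^t be a family of vectors whose range spans ℝ^t. Suppose there exists a sequence y : ℕ^n → ℝ such that ⟨a_α, a_β⟩ = y(α+β) for all α, β ∈ ℕ^n. Fix i ∈ {1,…,n} and let T : ℝ^t → ℝ^t be a linear map satisfying T(a_α) = a_{α+e_i} for all α ∈ ℕ^n. Then T is symmetric, i.e., ⟨T u, v⟩ = ⟨u, T v⟩ for all u, v ∈ ℝ^t. -/
open scoped InnerProductSpace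

section

variable {𝕜 E : Type*} [RCLike 𝕜] [NormedAddCommGroup E] [InnerProductSpace 𝕜 E]

theorem LinearMap.isSymmetric_of_span_eq_top {s : Set E} (hs : Submodule.span 𝕜 s = ⊤)
    (T : E →ₗ[𝕜] E) (h : ∀ x ∈ s, ∀ y ∈ s, ⟪T x, y⟫_𝕜 = ⟪x, T y⟫_𝕜) : T.IsSymmetric := by
  have hB : (innerₛₗ 𝕜).comp T = (innerₛₗ 𝕜).compl₂ T :=
    LinearMap.ext_on hs fun x hx => LinearMap.ext_on hs fun y hy => h x hx y hy
  exact fun x y => congrArg (fun B : E →ₗ⋆[𝕜] E →ₗ[𝕜] 𝕜 => B x y) hB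

theorem inner_map_eq_inner_map_of_hankel {M : Type*} [AddCommMonoid M] {a : M → E} {y : M → 𝕜}
    (hy : ∀ α β, ⟪a α, a β⟫_𝕜 = y (α + β)) {e : M} {T : E →ₗ[𝕜] E}
    (hT : ∀ α, T (a α) = a (α + e)) (α β : M) : ⟪T (a α), a β⟫_𝕜 = ⟪a α, T (a β)⟫_𝕜 := by
  rw [hT, hT, hy, hy, add_right_comm, add_assoc]

end

theorem stmt2_general (n t : ℕ)
    (a : (Fin n → ℕ) → EuclideanSpace ℝ (Fin t))
    (hspan : Submodule.span ℝ (Set.range a) = ⊤)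
    (y : (Fin n → ℕ) → ℝ)
    (hy : ∀ α β : Fin n → ℕ, (inner ℝ (a α) (a β) : ℝ) = y (α + β))
    (i : Fin n)
    (T : EuclideanSpace ℝ (Fin t) →ₗ[ℝ] EuclideanSpace ℝ (Fin t))
    (hT : ∀ α : Fin n → ℕ, T (a α) = a (α + fun j => if j = i then 1 else 0)) :
    ∀ u v : EuclideanSpace ℝ (Fin t), (inner ℝ (T u) v : ℝ) = inner ℝ u (T v) := by
  refine T.isSymmetric_of_span_eq_top hspan ?_
  rintro _ ⟨α, rfl⟩ _ ⟨β, rfl⟩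
  exact inner_map_eq_inner_map_of_hankel hy hT α β

/-- if ⟨a_α, a_β⟩ = y(α+β) for all α, β and T is a linear map on ℝ^t with
T(a_α) = a_{α+e_i}, where the range of a spans ℝ^t, then T is symmetric. -/
theorem stmt2 (n t : ℕ) (hn : 1 ≤ n) (ht : 1 ≤ t)
    (a : (Fin n → ℕ) → EuclideanSpace ℝ (Fin t))
    (hspan : Submodule.span ℝ (Set.range a) = ⊤)
    (y : (Fin n → ℕ) → ℝ)
    (hy : ∀ α β : Fin n → ℕ, (inner ℝ (a α) (a β) : ℝ) = y (α + β))
    (i : Fin n)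
    (T : EuclideanSpace ℝ (Fin t) →ₗ[ℝ] EuclideanSpace ℝ (Fin t))
    (hT : ∀ α : Fin n → ℕ, T (a α) = a (α + fun j => if j = i then 1 else 0)) :
    ∀ u v : EuclideanSpace ℝ (Fin t), (inner ℝ (T u) v : ℝ) = inner ℝ u (T v) :=
  stmt2_general n t a hspan y hy i T hT
end

section
/- Let n, t ≥ 1, let s ∈ ℕ, fix i ∈ {1,…,n}, and let a : ℕ^n → ℂ^t be a family of vectors such that {a_α : |α| ≤ s} spans ℂ^t. Let T : ℂ^t → ℂ^t be a linear map satisfying T(a_α) = a_{α+e_i} for all α ∈ ℕ^n. Then T is normal (T∘T* = T*∘T, where T* is the adjoint) if and only if the Hermitian block matrix indexed by two copies of ℕ^n_s, whose (β,γ) entry is ⟨a_β, a_γ⟩ on the top-left block, ⟨a_{β+e_i}, a_γ⟩ on the top-right block, ⟨a_β, a_{γ+e_i}⟩ on the bottom-left block, and ⟨a_{β+e_i}, a_{γ+e_i}⟩ on the bottom-right block, is positive semidefinite. -/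
/-! If `T` is normal, the block matrix is the Gram matrix of the family `(a_β, T† a_β)`.
Conversely, its quadratic form at the coefficient vectors of `p` and `q` (w.r.t. the spanning
family `a_β`) is `‖p‖² + 2 re ⟪T p, q⟫ + ‖T q‖²`; taking `p = -T† q` gives `‖T† q‖ ≤ ‖T q‖`.
Then `T†T - TT†` is a positive operator of trace zero, hence zero. -/

open scoped BigOperators ComplexOrder

/-- `MultiIdx n s` is the set ℕ^n_s = {α ∈ ℕ^n : |α| ≤ s}. -/
abbrev MultiIdx (n s : ℕ) := {α : Fin n → ℕ // (∑ j, α j) ≤ s}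

instance MultiIdx.finite (n s : ℕ) : Finite (MultiIdx n s) :=
  Finite.of_injective
    (fun a => (fun j => (⟨a.1 j, Nat.lt_succ_of_le
      ((Finset.single_le_sum (fun k _ => Nat.zero_le (a.1 k)) (Finset.mem_univ j)).trans
        a.2)⟩ : Fin (s + 1))))
    (fun _ _ h => Subtype.ext (funext fun j => congrArg Fin.val (congrFun h j)))

noncomputable instance MultiIdx.fintype (n s : ℕ) : Fintype (MultiIdx n s) :=
  Fintype.ofFinite _

/-- the i-th standard unit multi-index e_i ∈ ℕ^n. -/
def unitIdx {n : ℕ} (i : Fin n) : Fin n → ℕ := fun j => if j = i then 1 else 0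

open scoped InnerProductSpace

namespace LinearMap

variable {𝕜 E : Type*} [RCLike 𝕜] [NormedAddCommGroup E] [InnerProductSpace 𝕜 E]
  [FiniteDimensional 𝕜 E]

theorem IsPositive.trace_eq_zero_iff {f : E →ₗ[𝕜] E} (hf : f.IsPositive) :
    trace 𝕜 E f = 0 ↔ f = 0 := by
  let b := (stdOrthonormalBasis 𝕜 E).toBasis
  rw [trace_eq_matrix_trace 𝕜 b,
    ((posSemidef_toMatrix_iff (stdOrthonormalBasis 𝕜 E)).mpr hf).trace_eq_zero_iff,
    LinearEquiv.map_eq_zero_iff]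

theorem comp_adjoint_eq_of_norm_adjoint_apply_le {T : E →ₗ[𝕜] E}
    (hT : ∀ x, ‖adjoint T x‖ ≤ ‖T x‖) : T ∘ₗ adjoint T = adjoint T ∘ₗ T := by
  have hpos : (adjoint T ∘ₗ T - T ∘ₗ adjoint T).IsPositive := by
    refine ⟨(isPositive_adjoint_comp_self T).isSymmetric.sub ?_, fun x => ?_⟩
    · simpa using (isPositive_adjoint_comp_self (adjoint T)).isSymmetric
    · rw [sub_apply, inner_sub_left, map_sub, comp_apply, comp_apply, adjoint_inner_left T,
        ← adjoint_inner_right T (adjoint T x), inner_self_eq_norm_sq,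
        inner_self_eq_norm_sq, sub_nonneg]
      gcongr
      exact hT x
  have htrace : trace 𝕜 E (adjoint T ∘ₗ T - T ∘ₗ adjoint T) = 0 := by
    rw [map_sub, ← Module.End.mul_eq_comp, ← Module.End.mul_eq_comp, trace_mul_comm, sub_self]
  exact (sub_eq_zero.mp (hpos.trace_eq_zero_iff.mp htrace)).symm

end LinearMap

namespace Matrix

variable {𝕜 E ι : Type*} [RCLike 𝕜] [NormedAddCommGroup E] [InnerProductSpace 𝕜 E] [Fintype ι]

theorem star_dotProduct_of_inner_mulVec (v w : ι → E) (c d : ι → 𝕜) :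
    star c ⬝ᵥ (of fun i j => ⟪v i, w j⟫_𝕜) *ᵥ d = ⟪∑ i, c i • v i, ∑ j, d j • w j⟫_𝕜 := by
  simp_rw [sum_inner, inner_sum, inner_smul_left, inner_smul_right, dotProduct, mulVec,
    dotProduct, Finset.mul_sum, of_apply, Pi.star_apply, RCLike.star_def]
  exact Finset.sum_congr rfl fun i _ => Finset.sum_congr rfl fun j _ => by ring

variable (𝕜) in
def shiftedGram (T : E →ₗ[𝕜] E) (v : ι → E) : Matrix (ι ⊕ ι) (ι ⊕ ι) 𝕜 :=
  fromBlocks (gram 𝕜 v) (of fun β γ => ⟪T (v β), v γ⟫_𝕜) (of fun β γ => ⟪v β, T (v γ)⟫_𝕜)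
    (gram 𝕜 (T ∘ v))

theorem star_sumElim_dotProduct_shiftedGram_mulVec (T : E →ₗ[𝕜] E) (v : ι → E) (c d : ι → 𝕜) :
    star (Sum.elim c d) ⬝ᵥ shiftedGram 𝕜 T v *ᵥ Sum.elim c d =
      let p := ∑ i, c i • v i
      let q := ∑ i, d i • v i
      ⟪p, p⟫_𝕜 + ⟪T p, q⟫_𝕜 + ⟪q, T p⟫_𝕜 + ⟪T q, T q⟫_𝕜 := by
  rw [shiftedGram, fromBlocks_mulVec, Function.star_sumElim, sumElim_dotProduct_sumElim]
  simp only [Sum.elim_comp_inl, Sum.elim_comp_inr, dotProduct_add, gram,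
    star_dotProduct_of_inner_mulVec, Function.comp_apply, map_sum, map_smul, add_assoc]

variable [FiniteDimensional 𝕜 E] {T : E →ₗ[𝕜] E}

open LinearMap in
theorem posSemidef_shiftedGram_of_comp_adjoint_eq (hT : T ∘ₗ adjoint T = adjoint T ∘ₗ T)
    (v : ι → E) : (shiftedGram 𝕜 T v).PosSemidef := by
  have hnormal (x y : E) : ⟪adjoint T x, adjoint T y⟫_𝕜 = ⟪T x, T y⟫_𝕜 := by
    rw [adjoint_inner_left, ← LinearMap.comp_apply, hT, LinearMap.comp_apply, adjoint_inner_right]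
  have hgram : shiftedGram 𝕜 T v = gram 𝕜 (Sum.elim v (adjoint T ∘ v)) := by
    ext (β | β) (γ | γ) <;>
      simp [shiftedGram, gram_apply, adjoint_inner_left, adjoint_inner_right, hnormal]
  rw [hgram]
  exact posSemidef_gram 𝕜 _

open LinearMap in
theorem norm_adjoint_apply_le_of_posSemidef_shiftedGram {v : ι → E}
    (hv : Submodule.span 𝕜 (Set.range v) = ⊤) (hM : (shiftedGram 𝕜 T v).PosSemidef) (x : E) :
    ‖adjoint T x‖ ≤ ‖T x‖ := by
  have hspan (y : E) : ∃ c : ι → 𝕜, ∑ i, c i • v i = y :=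
    (Submodule.mem_span_range_iff_exists_fun 𝕜).mp (hv ▸ Submodule.mem_top)
  obtain ⟨c, hc⟩ := hspan (-adjoint T x)
  obtain ⟨d, hd⟩ := hspan x
  have hre : RCLike.re ⟪T (adjoint T x), x⟫_𝕜 = ‖adjoint T x‖ ^ 2 := by
    rw [← adjoint_inner_right, inner_self_eq_norm_sq]
  have hquad := hM.re_dotProduct_nonneg (Sum.elim c d)
  rw [star_sumElim_dotProduct_shiftedGram_mulVec] at hquad
  simp only [hc, hd, map_neg, inner_neg_left, inner_neg_right, neg_neg, map_add,
    inner_self_eq_norm_sq, inner_re_symm x, hre] at hquad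
  exact (pow_le_pow_iff_left₀ (norm_nonneg _) (norm_nonneg _) two_ne_zero).mp (by linarith)

theorem comp_adjoint_eq_iff_posSemidef_shiftedGram {v : ι → E}
    (hv : Submodule.span 𝕜 (Set.range v) = ⊤) :
    T ∘ₗ LinearMap.adjoint T = LinearMap.adjoint T ∘ₗ T ↔ (shiftedGram 𝕜 T v).PosSemidef :=
  ⟨fun hT => posSemidef_shiftedGram_of_comp_adjoint_eq hT v, fun hM =>
    LinearMap.comp_adjoint_eq_of_norm_adjoint_apply_le
      (norm_adjoint_apply_le_of_posSemidef_shiftedGram hv hM)⟩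

end Matrix

theorem stmt7_general (n t : ℕ) (s : ℕ) (i : Fin n)
    (a : (Fin n → ℕ) → EuclideanSpace ℂ (Fin t))
    (hspan : Submodule.span ℂ (a '' {α : Fin n → ℕ | (∑ j, α j) ≤ s}) = ⊤)
    (T : EuclideanSpace ℂ (Fin t) →ₗ[ℂ] EuclideanSpace ℂ (Fin t))
    (hT : ∀ α : Fin n → ℕ, T (a α) = a (α + unitIdx i)) :
    (T ∘ₗ LinearMap.adjoint T = LinearMap.adjoint T ∘ₗ T) ↔
      (Matrix.fromBlocks
        (Matrix.of fun β γ : MultiIdx n s => (inner ℂ (a β.1) (a γ.1) : ℂ))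
        (Matrix.of fun β γ : MultiIdx n s => (inner ℂ (a (β.1 + unitIdx i)) (a γ.1) : ℂ))
        (Matrix.of fun β γ : MultiIdx n s => (inner ℂ (a β.1) (a (γ.1 + unitIdx i)) : ℂ))
        (Matrix.of fun β γ : MultiIdx n s =>
          (inner ℂ (a (β.1 + unitIdx i)) (a (γ.1 + unitIdx i)) : ℂ))).PosSemidef := by
  have hv : Submodule.span ℂ (Set.range fun β : MultiIdx n s => a β.1) = ⊤ := by
    rwa [Set.image_eq_range] at hspan
  simp only [← hT]
  exact Matrix.comp_adjoint_eq_iff_posSemidef_shiftedGram hv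

/-- if {a_α : |α| ≤ s} spans ℂ^t and T is linear with T(a_α) = a_{α+e_i}
for all α, then T is normal iff the Hermitian block matrix with blocks ⟨a_β, a_γ⟩,
⟨a_{β+e_i}, a_γ⟩, ⟨a_β, a_{γ+e_i}⟩, ⟨a_{β+e_i}, a_{γ+e_i}⟩ (indexed by two copies of
ℕ^n_s) is positive semidefinite. -/
theorem stmt7 (n t : ℕ) (hn : 1 ≤ n) (ht : 1 ≤ t) (s : ℕ) (i : Fin n)
    (a : (Fin n → ℕ) → EuclideanSpace ℂ (Fin t))
    (hspan : Submodule.span ℂ (a '' {α : Fin n → ℕ | (∑ j, α j) ≤ s}) = ⊤)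
    (T : EuclideanSpace ℂ (Fin t) →ₗ[ℂ] EuclideanSpace ℂ (Fin t))
    (hT : ∀ α : Fin n → ℕ, T (a α) = a (α + unitIdx i)) :
    (T ∘ₗ LinearMap.adjoint T = LinearMap.adjoint T ∘ₗ T) ↔
      (Matrix.fromBlocks
        (Matrix.of fun β γ : MultiIdx n s => (inner ℂ (a β.1) (a γ.1) : ℂ))
        (Matrix.of fun β γ : MultiIdx n s => (inner ℂ (a (β.1 + unitIdx i)) (a γ.1) : ℂ))
        (Matrix.of fun β γ : MultiIdx n s => (inner ℂ (a β.1) (a (γ.1 + unitIdx i)) : ℂ))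
        (Matrix.of fun β γ : MultiIdx n s =>
          (inner ℂ (a (β.1 + unitIdx i)) (a (γ.1 + unitIdx i)) : ℂ))).PosSemidef :=
  stmt7_general n t s i a hspan T hT
end

section
/- Let f, g_1, …, g_m ∈ ℝ[x_1,…,x_n], let K := {x ∈ ℝ^n : g_i(x) ≥ 0 for i = 1,…,m}, and let f_min be the infimum of f over K, taken in the extended reals. Let d_i := ⌈deg(g_i)/2⌉ and d_min := max(⌈deg(f)/2⌉, d_1, …, d_m). For r ≥ d_min define, with all infima taken in the extended reals over sequences y : ℕ^n → ℝ: ρ_r := inf { L_y(f) : y_0 = 1, M_r(y) ⪰ 0, and M_{r−d_i}(g_i y) ⪰ 0 for all i ∈ {1,…,m} }, and ρ'_r := inf { L_y(f) : y_0 = 1, M_{r−d_i}(g_i y) ⪰ 0 for all i ∈ {1,…,m}, and for every i ∈ {1,…,n} the block matrix indexed by two copies of ℕ^n_r with (β,γ) entries y(β+γ) (top-left), y(β+γ+e_i) (top-right and bottom-left), y(β+γ+2e_i) (bottom-right) is positive semidefinite }. Then for every r ≥ d_min: ρ_r ≤ ρ'_r ≤ ρ_{r+1} ≤ f_min. -/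
open scoped BigOperators

namespace Stmt8

/-- `MIdx n r` is the set ℕ^n_r = {α ∈ ℕ^n : |α| ≤ r} (multi-indices as finitely
supported functions, matching monomial exponents of `MvPolynomial`). -/
abbrev MIdx (n r : ℕ) := {α : Fin n →₀ ℕ // (∑ j, α j) ≤ r}

instance MIdx.finite (n r : ℕ) : Finite (MIdx n r) :=
  Finite.of_injective
    (fun a => (fun j => (⟨a.1 j, Nat.lt_succ_of_le
      ((Finset.single_le_sum (fun k _ => Nat.zero_le (a.1 k)) (Finset.mem_univ j)).trans
        a.2)⟩ : Fin (r + 1))))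
    (fun _ _ h => Subtype.ext (Finsupp.ext fun j => congrArg Fin.val (congrFun h j)))

noncomputable instance MIdx.fintype (n r : ℕ) : Fintype (MIdx n r) := Fintype.ofFinite _

/-- the Riesz functional L_y(f) = Σ_α f_α y_α. -/
noncomputable def Ly {n : ℕ} (y : (Fin n →₀ ℕ) → ℝ) (f : MvPolynomial (Fin n) ℝ) : ℝ :=
  ∑ α ∈ f.support, f.coeff α * y α

/-- the truncated moment matrix M_r(y), with entries y(β+γ), indexed by ℕ^n_r. -/
noncomputable def momMat {n : ℕ} (r : ℕ) (y : (Fin n →₀ ℕ) → ℝ) :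
    Matrix (MIdx n r) (MIdx n r) ℝ :=
  Matrix.of fun β γ => y (β.1 + γ.1)

/-- the localizing matrix M_r(g y), with entries Σ_α g_α y(α+β+γ), indexed by ℕ^n_r. -/
noncomputable def locMat {n : ℕ} (r : ℕ) (g : MvPolynomial (Fin n) ℝ)
    (y : (Fin n →₀ ℕ) → ℝ) : Matrix (MIdx n r) (MIdx n r) ℝ :=
  Matrix.of fun β γ => ∑ α ∈ g.support, g.coeff α * y (α + β.1 + γ.1)

/-- the block matrix [[M_r(y), M_r(x_i y)], [M_r(x_i y), M_r(x_i² y)]]. -/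
noncomputable def blockMat {n : ℕ} (r : ℕ) (y : (Fin n →₀ ℕ) → ℝ) (i : Fin n) :
    Matrix (MIdx n r ⊕ MIdx n r) (MIdx n r ⊕ MIdx n r) ℝ :=
  Matrix.fromBlocks
    (Matrix.of fun β γ => y (β.1 + γ.1))
    (Matrix.of fun β γ => y (β.1 + γ.1 + Finsupp.single i 1))
    (Matrix.of fun β γ => y (β.1 + γ.1 + Finsupp.single i 1))
    (Matrix.of fun β γ => y (β.1 + γ.1 + Finsupp.single i 1 + Finsupp.single i 1))

/-- d_i := ⌈deg(g_i)/2⌉. -/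
noncomputable def halfDeg {n : ℕ} (g : MvPolynomial (Fin n) ℝ) : ℕ :=
  (g.totalDegree + 1) / 2

/-- the r-th moment relaxation value ρ_r (infimum in the extended reals). -/
noncomputable def rho {n m : ℕ} (f : MvPolynomial (Fin n) ℝ)
    (g : Fin m → MvPolynomial (Fin n) ℝ) (r : ℕ) : EReal :=
  sInf {v : EReal | ∃ y : (Fin n →₀ ℕ) → ℝ,
    y 0 = 1 ∧ (momMat r y).PosSemidef ∧
    (∀ i, (locMat (r - halfDeg (g i)) (g i) y).PosSemidef) ∧
    v = (Ly y f : ℝ)}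

/-- the strengthened r-th moment relaxation value ρ'_r (infimum in the extended reals). -/
noncomputable def rho' {n m : ℕ} (f : MvPolynomial (Fin n) ℝ)
    (g : Fin m → MvPolynomial (Fin n) ℝ) (r : ℕ) : EReal :=
  sInf {v : EReal | ∃ y : (Fin n →₀ ℕ) → ℝ,
    y 0 = 1 ∧
    (∀ i, (locMat (r - halfDeg (g i)) (g i) y).PosSemidef) ∧
    (∀ i : Fin n, (blockMat r y i).PosSemidef) ∧
    v = (Ly y f : ℝ)}

/-- f_min = inf {f(x) : x ∈ K} in the extended reals, K = {x : g_i(x) ≥ 0 ∀ i}. -/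
noncomputable def fmin {n m : ℕ} (f : MvPolynomial (Fin n) ℝ)
    (g : Fin m → MvPolynomial (Fin n) ℝ) : EReal :=
  sInf {v : EReal | ∃ x : Fin n → ℝ,
    (∀ i, 0 ≤ MvPolynomial.eval x (g i)) ∧ v = (MvPolynomial.eval x f : ℝ)}

end Stmt8

/-!
The three inequalities compare infima over nested feasible sets. The block matrix of `ρ'_r`
contains `M_r(y)` as its top-left block, and it is itself the principal submatrix of
`M_{r+1}(y)` on the rows `β` and `β + e_i`; localizing matrices only shrink when `r` decreases.
Finally, the moments `y_α = x^α` of a point `x ∈ K` are feasible for every `ρ_r`, with value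
`f(x)`, because all their moment and localizing matrices are nonnegative multiples of `v vᵀ`
with `v_β = x^β`.
-/

open Matrix MvPolynomial

namespace Stmt8

variable {n : ℕ}

def MIdx.castLE {r s : ℕ} (h : r ≤ s) (a : MIdx n r) : MIdx n s := ⟨a.1, a.2.trans h⟩

noncomputable def MIdx.shift {r : ℕ} (i : Fin n) (a : MIdx n r) : MIdx n (r + 1) :=
  ⟨a.1 + Finsupp.single i 1, by
    simpa [Finset.sum_add_distrib, Finsupp.single_apply] using a.2⟩

section Submatrices

variable (r : ℕ) (y : (Fin n →₀ ℕ) → ℝ)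

theorem momMat_eq_submatrix_blockMat (i : Fin n) :
    momMat r y = (blockMat r y i).submatrix Sum.inl Sum.inl :=
  rfl

theorem blockMat_eq_submatrix_momMat (i : Fin n) :
    blockMat r y i = (momMat (r + 1) y).submatrix
      (Sum.elim (MIdx.castLE r.le_succ) (MIdx.shift i))
      (Sum.elim (MIdx.castLE r.le_succ) (MIdx.shift i)) := by
  ext (β | β) (γ | γ) <;>
    simp only [blockMat, momMat, MIdx.castLE, MIdx.shift, fromBlocks, submatrix_apply,
      of_apply, Sum.elim_inl, Sum.elim_inr] <;>
    exact congrArg y (by abel)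

theorem locMat_eq_submatrix_of_le {r s : ℕ} (h : r ≤ s) (g : MvPolynomial (Fin n) ℝ) :
    locMat r g y = (locMat s g y).submatrix (MIdx.castLE h) (MIdx.castLE h) :=
  rfl

end Submatrices

def pointMoments (x : Fin n → ℝ) (α : Fin n →₀ ℕ) : ℝ := ∏ j, x j ^ α j

section PointMoments

variable (x : Fin n → ℝ)

@[simp]
theorem pointMoments_zero : pointMoments x 0 = 1 := by
  simp [pointMoments]

theorem pointMoments_add (α β : Fin n →₀ ℕ) :
    pointMoments x (α + β) = pointMoments x α * pointMoments x β := by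
  simp only [pointMoments, ← Finset.prod_mul_distrib, Finsupp.add_apply, pow_add]

theorem Ly_pointMoments (f : MvPolynomial (Fin n) ℝ) : Ly (pointMoments x) f = eval x f :=
  (eval_eq' x f).symm

theorem momMat_pointMoments (r : ℕ) :
    momMat r (pointMoments x) =
      vecMulVec (fun β : MIdx n r => pointMoments x β.1) (fun β => pointMoments x β.1) := by
  ext β γ
  simp [momMat, vecMulVec_apply, pointMoments_add]

theorem locMat_pointMoments (r : ℕ) (g : MvPolynomial (Fin n) ℝ) :
    locMat r g (pointMoments x) = eval x g •
      vecMulVec (fun β : MIdx n r => pointMoments x β.1) (fun β => pointMoments x β.1) := by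
  ext β γ
  rw [← Ly_pointMoments]
  simp only [locMat, Ly, of_apply, Matrix.smul_apply, vecMulVec_apply, pointMoments_add,
    smul_eq_mul, Finset.sum_mul]
  exact Finset.sum_congr rfl fun α _ => by ring

theorem momMat_pointMoments_posSemidef (r : ℕ) : (momMat r (pointMoments x)).PosSemidef := by
  simpa [momMat_pointMoments] using posSemidef_vecMulVec_self_star
    (fun β : MIdx n r => pointMoments x β.1)

theorem locMat_pointMoments_posSemidef (r : ℕ) {g : MvPolynomial (Fin n) ℝ}
    (hg : 0 ≤ eval x g) : (locMat r g (pointMoments x)).PosSemidef := by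
  rw [locMat_pointMoments]
  simpa using (posSemidef_vecMulVec_self_star (fun β : MIdx n r => pointMoments x β.1)).smul hg

end PointMoments

section Relaxations

variable {m : ℕ} (f : MvPolynomial (Fin n) ℝ) (g : Fin m → MvPolynomial (Fin n) ℝ) (r : ℕ)

theorem rho_le_rho' (hn : 0 < n) : rho f g r ≤ rho' f g r := by
  refine sInf_le_sInf ?_
  rintro v ⟨y, hy0, hloc, hblock, rfl⟩
  refine ⟨y, hy0, ?_, hloc, rfl⟩
  rw [momMat_eq_submatrix_blockMat r y ⟨0, hn⟩]
  exact (hblock _).submatrix _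

theorem rho'_le_rho_succ : rho' f g r ≤ rho f g (r + 1) := by
  refine sInf_le_sInf ?_
  rintro v ⟨y, hy0, hmom, hloc, rfl⟩
  refine ⟨y, hy0, fun i => ?_, fun i => ?_, rfl⟩
  · rw [locMat_eq_submatrix_of_le y (Nat.sub_le_sub_right r.le_succ _)]
    exact (hloc i).submatrix _
  · rw [blockMat_eq_submatrix_momMat]
    exact hmom.submatrix _

theorem rho_le_fmin : rho f g r ≤ fmin f g := by
  refine sInf_le_sInf ?_
  rintro v ⟨x, hx, rfl⟩
  exact ⟨pointMoments x, pointMoments_zero x, momMat_pointMoments_posSemidef x r,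
    fun i => locMat_pointMoments_posSemidef x _ (hx i), by rw [Ly_pointMoments]⟩

end Relaxations

end Stmt8

theorem stmt8_general {n m : ℕ} (hn : 1 ≤ n) (f : MvPolynomial (Fin n) ℝ)
    (g : Fin m → MvPolynomial (Fin n) ℝ) (r : ℕ) :
    Stmt8.rho f g r ≤ Stmt8.rho' f g r ∧
    Stmt8.rho' f g r ≤ Stmt8.rho f g (r + 1) ∧
    Stmt8.rho f g (r + 1) ≤ Stmt8.fmin f g :=
  ⟨Stmt8.rho_le_rho' f g r hn, Stmt8.rho'_le_rho_succ f g r, Stmt8.rho_le_fmin f g (r + 1)⟩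

/-- for every r ≥ d_min, ρ_r ≤ ρ'_r ≤ ρ_{r+1} ≤ f_min. -/
theorem stmt8 {n m : ℕ} (hn : 1 ≤ n) (f : MvPolynomial (Fin n) ℝ)
    (g : Fin m → MvPolynomial (Fin n) ℝ) (r : ℕ)
    (hr : max (Stmt8.halfDeg f) (Finset.univ.sup fun i => Stmt8.halfDeg (g i)) ≤ r) :
    Stmt8.rho f g r ≤ Stmt8.rho' f g r ∧
    Stmt8.rho' f g r ≤ Stmt8.rho f g (r + 1) ∧
    Stmt8.rho f g (r + 1) ≤ Stmt8.fmin f g :=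
  stmt8_general hn f g r
end

section
/- Let f, g_1, …, g_m be self-conjugate polynomials in ℂ[x, x̄] with coefficient families f_{β,γ} and g^i_{β,γ}, let K := {w ∈ ℂ^n : g_i(w, conj w) ≥ 0 for i = 1,…,m}, and let f_min be the infimum of the real-valued function w ↦ f(w, conj w) over K, taken in the extended reals. Let d_0 := max{ max(|β|,|γ|) : f_{β,γ} ≠ 0 }, d_i := max{ max(|β|,|γ|) : g^i_{β,γ} ≠ 0 }, and d_min := max(d_0, d_1, …, d_m). For r ≥ d_min and s ∈ ℕ define, with all infima taken in the extended reals over complex pseudo-moment sequences y: τ_r := inf { L_y(f) : y(0,0) = 1, M_r^ℂ(y) ⪰ 0, and M^ℂ_{r−d_i}(g_i y) ⪰ 0 for all i ∈ {1,…,m} }, and τ'_{r,s} := inf over the same constraints with additionally, for every i ∈ {1,…,n}, the Hermitian block matrix indexed by two copies of ℕ^n_s with (β,γ) entries y(β,γ) (top-left), y(β+e_i, γ) (top-right), y(β, γ+e_i) (bottom-left), y(β+e_i, γ+e_i) (bottom-right) positive semidefinite. Then for every r ≥ d_min and every s ∈ ℕ: τ_r ≤ τ'_{r,s} ≤ τ'_{r,s+1}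 ≤ f_min. -/
/-! The three relaxations differ only in their constraint sets. Dropping the block-matrix
constraints, or passing from `s + 1` to `s` (the blocks for `s` are principal submatrices of
those for `s + 1`), enlarges the feasible set and so can only lower the infimum. For the bound
by `f_min`, every `w ∈ K` gives the feasible Dirac moment sequence `y(β, γ) = w^β conj(w)^γ`:
its moment and block matrices are rank-one matrices `u u*`, its localizing matrix for `g_i` is
`g_i(w, conj w) ≥ 0` times its moment matrix, and `L_y(f) = f(w, conj w)`. -/

open scoped BigOperators ComplexOrder

namespace CStmt

/-- `MIdx n r` is the set ℕ^n_r = {α ∈ ℕ^n : |α| ≤ r}. -/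
abbrev MIdx (n r : ℕ) := {α : Fin n → ℕ // (∑ j, α j) ≤ r}

instance MIdx.finite (n r : ℕ) : Finite (MIdx n r) :=
  Finite.of_injective
    (fun a => (fun j => (⟨a.1 j, Nat.lt_succ_of_le
      ((Finset.single_le_sum (fun k _ => Nat.zero_le (a.1 k)) (Finset.mem_univ j)).trans
        a.2)⟩ : Fin (r + 1))))
    (fun _ _ h => Subtype.ext (funext fun j => congrArg Fin.val (congrFun h j)))

noncomputable instance MIdx.fintype (n r : ℕ) : Fintype (MIdx n r) := Fintype.ofFinite _

/-- the i-th standard unit multi-index e_i ∈ ℕ^n. -/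
def unitIdx {n : ℕ} (i : Fin n) : Fin n → ℕ := fun j => if j = i then 1 else 0

/-- w^α := ∏_j w_j^{α_j}. -/
noncomputable def mono {n : ℕ} (w : Fin n → ℂ) (α : Fin n → ℕ) : ℂ := ∏ j, w j ^ α j

/-- a polynomial in ℂ[x, x̄] is a finitely supported coefficient family
F_{β,γ} ∈ ℂ indexed by pairs of multi-indices (β,γ) ∈ ℕ^n × ℕ^n. -/
abbrev CPoly (n : ℕ) := ((Fin n → ℕ) × (Fin n → ℕ)) →₀ ℂ

/-- F is self-conjugate: F_{γ,β} = conj(F_{β,γ}). -/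
def SelfConj {n : ℕ} (F : CPoly n) : Prop :=
  ∀ β γ : Fin n → ℕ, F (γ, β) = (starRingEnd ℂ) (F (β, γ))

/-- the (real) value f(w, conj w) = Σ_{β,γ} F_{β,γ} w^β conj(w)^γ of a self-conjugate
polynomial at w ∈ ℂ^n. -/
noncomputable def peval {n : ℕ} (F : CPoly n) (w : Fin n → ℂ) : ℝ :=
  (∑ p ∈ F.support, F p * mono w p.1 * (starRingEnd ℂ) (mono w p.2)).re

/-- the degree d = max{ max(|β|,|γ|) : F_{β,γ} ≠ 0 }. -/
noncomputable def degF {n : ℕ} (F : CPoly n) : ℕ :=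
  F.support.sup fun p => max (∑ j, p.1 j) (∑ j, p.2 j)

/-- y is a complex pseudo-moment sequence: y(γ,β) = conj(y(β,γ)). -/
def IsPseudoMoment {n : ℕ} (y : (Fin n → ℕ) → (Fin n → ℕ) → ℂ) : Prop :=
  ∀ β γ : Fin n → ℕ, y γ β = (starRingEnd ℂ) (y β γ)

/-- the (real) Riesz functional L_y(f) = Σ_{β,γ} f_{β,γ} y(β,γ) for self-conjugate f. -/
noncomputable def Ly {n : ℕ} (y : (Fin n → ℕ) → (Fin n → ℕ) → ℂ) (F : CPoly n) : ℝ :=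
  (∑ p ∈ F.support, F p * y p.1 p.2).re

/-- the truncated complex moment matrix M_r^ℂ(y), entries y(β,γ), indexed by ℕ^n_r. -/
noncomputable def momMat {n : ℕ} (r : ℕ) (y : (Fin n → ℕ) → (Fin n → ℕ) → ℂ) :
    Matrix (MIdx n r) (MIdx n r) ℂ :=
  Matrix.of fun β γ => y β.1 γ.1

/-- the complex localizing matrix M_r^ℂ(g y), entries Σ_{β',γ'} g_{β',γ'} y(β+β',γ+γ'). -/
noncomputable def locMat {n : ℕ} (r : ℕ) (F : CPoly n)
    (y : (Fin n → ℕ) → (Fin n → ℕ) → ℂ) : Matrix (MIdx n r) (MIdx n r) ℂ :=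
  Matrix.of fun β γ => ∑ p ∈ F.support, F p * y (β.1 + p.1) (γ.1 + p.2)

/-- the Hermitian block matrix [[M_s^ℂ(y), M_s^ℂ(x_i y)], [M_s^ℂ(x̄_i y), M_s^ℂ(|x_i|² y)]]. -/
noncomputable def blockMat {n : ℕ} (s : ℕ) (y : (Fin n → ℕ) → (Fin n → ℕ) → ℂ)
    (i : Fin n) : Matrix (MIdx n s ⊕ MIdx n s) (MIdx n s ⊕ MIdx n s) ℂ :=
  Matrix.fromBlocks
    (Matrix.of fun β γ => y β.1 γ.1)
    (Matrix.of fun β γ => y (β.1 + unitIdx i) γ.1)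
    (Matrix.of fun β γ => y β.1 (γ.1 + unitIdx i))
    (Matrix.of fun β γ => y (β.1 + unitIdx i) (γ.1 + unitIdx i))

/-- the r-th complex moment relaxation value τ_r (infimum in the extended reals). -/
noncomputable def tau {n m : ℕ} (F : CPoly n) (G : Fin m → CPoly n) (r : ℕ) : EReal :=
  sInf {v : EReal | ∃ y : (Fin n → ℕ) → (Fin n → ℕ) → ℂ,
    IsPseudoMoment y ∧ y 0 0 = 1 ∧ (momMat r y).PosSemidef ∧
    (∀ i, (locMat (r - degF (G i)) (G i) y).PosSemidef) ∧
    v = (Ly y F : ℝ)}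

/-- the strengthened complex moment relaxation value τ'_{r,s}
(infimum in the extended reals). -/
noncomputable def tau' {n m : ℕ} (F : CPoly n) (G : Fin m → CPoly n) (r s : ℕ) : EReal :=
  sInf {v : EReal | ∃ y : (Fin n → ℕ) → (Fin n → ℕ) → ℂ,
    IsPseudoMoment y ∧ y 0 0 = 1 ∧ (momMat r y).PosSemidef ∧
    (∀ i, (locMat (r - degF (G i)) (G i) y).PosSemidef) ∧
    (∀ i : Fin n, (blockMat s y i).PosSemidef) ∧
    v = (Ly y F : ℝ)}

/-- f_min = inf {f(w, conj w) : w ∈ K} in the extended reals,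
K = {w ∈ ℂ^n : g_i(w, conj w) ≥ 0 ∀ i}. -/
noncomputable def fmin {n m : ℕ} (F : CPoly n) (G : Fin m → CPoly n) : EReal :=
  sInf {v : EReal | ∃ w : Fin n → ℂ,
    (∀ i, 0 ≤ peval (G i) w) ∧ v = (peval F w : ℝ)}

open Matrix

variable {n : ℕ}

lemma mono_zero (w : Fin n → ℂ) : mono w 0 = 1 := by
  simp [mono]

lemma mono_add (w : Fin n → ℂ) (a b : Fin n → ℕ) :
    mono w (a + b) = mono w a * mono w b := by
  simp [mono, pow_add, Finset.prod_mul_distrib]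

lemma mono_unitIdx (w : Fin n → ℂ) (i : Fin n) : mono w (unitIdx i) = w i := by
  rw [mono, Finset.prod_eq_single i (fun j _ hj => by simp [unitIdx, hj]) (by simp)]
  simp [unitIdx]

lemma ofReal_peval {F : CPoly n} (hF : SelfConj F) (w : Fin n → ℂ) :
    (peval F w : ℂ) = ∑ p ∈ F.support, F p * mono w p.1 * starRingEnd ℂ (mono w p.2) := by
  have swap_mem : ∀ p ∈ F.support, p.swap ∈ F.support := fun p hp => by
    rw [Finsupp.mem_support_iff] at hp ⊢
    rw [Prod.swap, hF]
    simpa using hp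
  refine Complex.conj_eq_iff_re.mp ?_
  rw [map_sum]
  refine Finset.sum_nbij' Prod.swap Prod.swap swap_mem swap_mem
    (fun _ _ => rfl) (fun _ _ => rfl) fun ⟨β, γ⟩ _ => ?_
  simp only [Prod.swap_prod_mk, map_mul, Complex.conj_conj, hF β γ]
  ring

noncomputable def diracMoment (w : Fin n → ℂ) : (Fin n → ℕ) → (Fin n → ℕ) → ℂ :=
  fun β γ => mono w β * starRingEnd ℂ (mono w γ)

section diracMoment

variable (w : Fin n → ℂ)

lemma isPseudoMoment_diracMoment : IsPseudoMoment (diracMoment w) := fun β γ => by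
  simp only [diracMoment, map_mul, Complex.conj_conj]
  ring

lemma diracMoment_zero_zero : diracMoment w 0 0 = 1 := by
  simp [diracMoment, mono_zero]

lemma momMat_diracMoment (r : ℕ) :
    momMat r (diracMoment w) =
      vecMulVec (fun β : MIdx n r => mono w β.1) (star fun β => mono w β.1) :=
  rfl

lemma posSemidef_momMat_diracMoment (r : ℕ) : (momMat r (diracMoment w)).PosSemidef := by
  rw [momMat_diracMoment]
  exact posSemidef_vecMulVec_self_star _

lemma locMat_diracMoment {G : CPoly n} (hG : SelfConj G) (r : ℕ) :
    locMat r G (diracMoment w) = peval G w • momMat r (diracMoment w) := by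
  ext β γ
  rw [Matrix.smul_apply, Complex.real_smul, ofReal_peval hG, Finset.sum_mul]
  simp only [locMat, momMat, diracMoment, of_apply, mono_add, map_mul]
  exact Finset.sum_congr rfl fun _ _ => by ring

lemma posSemidef_locMat_diracMoment {G : CPoly n} (hG : SelfConj G) (hw : 0 ≤ peval G w)
    (r : ℕ) : (locMat r G (diracMoment w)).PosSemidef := by
  rw [locMat_diracMoment w hG]
  exact (posSemidef_momMat_diracMoment w r).smul hw

lemma blockMat_diracMoment (s : ℕ) (i : Fin n) :
    blockMat s (diracMoment w) i =
      vecMulVec (Sum.elim (fun β : MIdx n s => mono w β.1)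
        (fun β => mono w β.1 * starRingEnd ℂ (w i)))
      (star (Sum.elim (fun β : MIdx n s => mono w β.1)
        (fun β => mono w β.1 * starRingEnd ℂ (w i)))) := by
  ext (β | β) (γ | γ) <;>
    simp [blockMat, diracMoment, vecMulVec_apply, mono_add, mono_unitIdx] <;> ring

lemma posSemidef_blockMat_diracMoment (s : ℕ) (i : Fin n) :
    (blockMat s (diracMoment w) i).PosSemidef := by
  rw [blockMat_diracMoment]
  exact posSemidef_vecMulVec_self_star _

lemma ly_diracMoment (F : CPoly n) : Ly (diracMoment w) F = peval F w := by
  simp only [Ly, peval, diracMoment, mul_assoc]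

end diracMoment

def MIdx.inclusion {s t : ℕ} (h : s ≤ t) (α : MIdx n s) : MIdx n t := ⟨α.1, α.2.trans h⟩

lemma blockMat_submatrix_inclusion {s t : ℕ} (h : s ≤ t)
    (y : (Fin n → ℕ) → (Fin n → ℕ) → ℂ) (i : Fin n) :
    (blockMat t y i).submatrix (Sum.map (MIdx.inclusion h) (MIdx.inclusion h))
      (Sum.map (MIdx.inclusion h) (MIdx.inclusion h)) = blockMat s y i := by
  ext (β | β) (γ | γ) <;> rfl

lemma posSemidef_blockMat_of_le {s t : ℕ} (h : s ≤ t)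
    {y : (Fin n → ℕ) → (Fin n → ℕ) → ℂ} {i : Fin n} (hy : (blockMat t y i).PosSemidef) :
    (blockMat s y i).PosSemidef :=
  blockMat_submatrix_inclusion h y i ▸ hy.submatrix _

variable {m : ℕ}

lemma tau_le_tau' (F : CPoly n) (G : Fin m → CPoly n) (r s : ℕ) : tau F G r ≤ tau' F G r s :=
  sInf_le_sInf fun _ ⟨y, hy, hy₀, hM, hL, _, hv⟩ => ⟨y, hy, hy₀, hM, hL, hv⟩

lemma tau'_mono (F : CPoly n) (G : Fin m → CPoly n) (r : ℕ) : Monotone (tau' F G r) :=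
  fun _ _ hst =>
    sInf_le_sInf fun _ ⟨y, hy, hy₀, hM, hL, hB, hv⟩ =>
      ⟨y, hy, hy₀, hM, hL, fun i => posSemidef_blockMat_of_le hst (hB i), hv⟩

lemma tau'_le_fmin (F : CPoly n) {G : Fin m → CPoly n} (hG : ∀ i, SelfConj (G i)) (r s : ℕ) :
    tau' F G r s ≤ fmin F G :=
  sInf_le_sInf fun _ ⟨w, hw, hv⟩ =>
    ⟨diracMoment w, isPseudoMoment_diracMoment w, diracMoment_zero_zero w,
      posSemidef_momMat_diracMoment w r,
      fun i => posSemidef_locMat_diracMoment w (hG i) (hw i) _,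
      fun i => posSemidef_blockMat_diracMoment w s i, by rw [hv, ly_diracMoment]⟩

end CStmt

theorem stmt9_general {n m : ℕ} (F : CStmt.CPoly n) (G : Fin m → CStmt.CPoly n)
    (hG : ∀ i, CStmt.SelfConj (G i)) (r s : ℕ) :
    CStmt.tau F G r ≤ CStmt.tau' F G r s ∧
    CStmt.tau' F G r s ≤ CStmt.tau' F G r (s + 1) ∧
    CStmt.tau' F G r (s + 1) ≤ CStmt.fmin F G :=
  ⟨CStmt.tau_le_tau' F G r s, CStmt.tau'_mono F G r s.le_succ, CStmt.tau'_le_fmin F hG r _⟩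

/-- for self-conjugate f, g_1, …, g_m, every r ≥ d_min and every s ∈ ℕ:
τ_r ≤ τ'_{r,s} ≤ τ'_{r,s+1} ≤ f_min. -/
theorem stmt9 {n m : ℕ} (hn : 1 ≤ n) (F : CStmt.CPoly n) (G : Fin m → CStmt.CPoly n)
    (hF : CStmt.SelfConj F) (hG : ∀ i, CStmt.SelfConj (G i)) (r s : ℕ)
    (hr : max (CStmt.degF F) (Finset.univ.sup fun i => CStmt.degF (G i)) ≤ r) :
    CStmt.tau F G r ≤ CStmt.tau' F G r s ∧
    CStmt.tau' F G r s ≤ CStmt.tau' F G r (s + 1) ∧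
    CStmt.tau' F G r (s + 1) ≤ CStmt.fmin F G :=
  stmt9_general F G hG r s
end
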